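/- Let p > 1 and let f : (0,∞)² → [0,∞) be measurable with f^p Lebesgue integrable on (0,∞)². Define R(x,y) = (1/(xy)) ∫₀^x ∫₀^y f(s,t) dt ds. Then ∫₀^∞ ∫₀^∞ R(x,y)^p dx dy ≤ (p/(p−1))^{2p} ∫₀^∞ ∫₀^∞ f(x,y)^p dx dy. -/

import Mathlib

/-!
The two-dimensional averaging operator factors, by Tonelli, as the one-dimensional Hardy operator
`g ↦ x⁻¹ ∫₀ˣ g` in `y` followed by the same operator in `x`, so the inequality is the
one-dimensional Hardy inequality applied twice, each time with the constant `q ^ p`,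
`q = p / (p - 1)`. In dimension one, Hölder's inequality for `g = (g t^{1/(pq)}) · t^{-1/(pq)}`
gives `(∫₀ˣ g)^p ≤ q^{p-1} x^{(p-1)/q} ∫₀ˣ g^p t^{1/q}`; exchanging the order of integration and
using `∫ₜ^∞ x^{-1-1/q} dx = q t^{-1/q}` turns the weights into the constant `q`.
Everything is carried out for `ℝ≥0∞`-valued functions and lower Lebesgue integrals, where
Tonelli needs no integrability, and transferred to Bochner integrals at the end.
-/

open MeasureTheory Set
open scoped ENNReal

theorem ofReal_integral_le_lintegral_ofReal {α : Type*} [MeasurableSpace α] {μ : Measure α}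
    (f : α → ℝ) : ENNReal.ofReal (∫ a, f a ∂μ) ≤ ∫⁻ a, ENNReal.ofReal (f a) ∂μ := by
  by_cases hf : Integrable f μ
  · rw [integral_eq_lintegral_pos_part_sub_lintegral_neg_part hf]
    calc ENNReal.ofReal (_ - _) ≤ ENNReal.ofReal (∫⁻ a, ENNReal.ofReal (f a) ∂μ).toReal :=
          ENNReal.ofReal_le_ofReal (sub_le_self _ ENNReal.toReal_nonneg)
      _ ≤ _ := ENNReal.ofReal_toReal_le
  · simp [integral_undef hf]

theorem ofReal_integral_integral_le_lintegral_lintegral {α β : Type*} [MeasurableSpace α]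
    [MeasurableSpace β] {μ : Measure α} {ν : Measure β} (F : α → β → ℝ) :
    ENNReal.ofReal (∫ x, ∫ y, F x y ∂ν ∂μ) ≤ ∫⁻ x, ∫⁻ y, ENNReal.ofReal (F x y) ∂ν ∂μ :=
  (ofReal_integral_le_lintegral_ofReal _).trans
    (lintegral_mono fun _ => ofReal_integral_le_lintegral_ofReal _)

section Prod

variable {α β : Type*} [MeasurableSpace α] [MeasurableSpace β] {μ : Measure α} {ν : Measure β}
  [SFinite ν] {F : α → β → ℝ}

theorem lintegral_lintegral_ofReal_lt_top (hF : Integrable (Function.uncurry F) (μ.prod ν)) :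
    ∫⁻ x, ∫⁻ y, ENNReal.ofReal (F x y) ∂ν ∂μ < ∞ :=
  (lintegral_prod _ hF.aemeasurable.ennreal_ofReal).symm.trans_lt hF.lintegral_lt_top

theorem integral_integral_eq_toReal_lintegral_lintegral [SFinite μ] (hF0 : ∀ x y, 0 ≤ F x y)
    (hF : Integrable (Function.uncurry F) (μ.prod ν)) :
    ∫ x, ∫ y, F x y ∂ν ∂μ = (∫⁻ x, ∫⁻ y, ENNReal.ofReal (F x y) ∂ν ∂μ).toReal := by
  refine (integral_prod _ hF).symm.trans ?_
  rw [integral_eq_lintegral_of_nonneg_ae (f := Function.uncurry F)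
      (ae_of_all _ fun z => hF0 z.1 z.2) hF.aestronglyMeasurable,
    lintegral_prod _ hF.aemeasurable.ennreal_ofReal]
  rfl

end Prod

theorem setLIntegral_Ioc_zero_ofReal_rpow {x r : ℝ} (hx : 0 < x) (hr : -1 < r) :
    ∫⁻ t in Ioc 0 x, ENNReal.ofReal (t ^ r) = ENNReal.ofReal (x ^ (r + 1) / (r + 1)) := by
  rw [← ofReal_integral_eq_lintegral_ofReal (intervalIntegral.intervalIntegrable_rpow' hr).1
      ((ae_restrict_iff' measurableSet_Ioc).2 (ae_of_all _ fun t ht => Real.rpow_nonneg ht.1.le r)),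
    ← intervalIntegral.integral_of_le hx.le, integral_rpow (Or.inl hr),
    Real.zero_rpow (by linarith), sub_zero]

theorem setLIntegral_Ici_ofReal_rpow {t r : ℝ} (ht : 0 < t) (hr : r < -1) :
    ∫⁻ x in Ici t, ENNReal.ofReal (x ^ r) = ENNReal.ofReal (-t ^ (r + 1) / (r + 1)) := by
  rw [← setLIntegral_congr Ioi_ae_eq_Ici,
    ← ofReal_integral_eq_lintegral_ofReal (integrableOn_Ioi_rpow_of_lt hr ht)
      ((ae_restrict_iff' measurableSet_Ioi).2
        (ae_of_all _ fun x hx => Real.rpow_nonneg (ht.trans hx).le r)),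
    integral_Ioi_rpow_of_lt hr ht]

theorem measurableSet_snd_mem_Ioc_zero {α : Type*} [MeasurableSpace α] {a : α → ℝ}
    (ha : Measurable a) : MeasurableSet {z : α × ℝ | z.2 ∈ Ioc 0 (a z.1)} :=
  (measurableSet_lt measurable_const measurable_snd).inter
    (measurableSet_le measurable_snd (ha.comp measurable_fst))

theorem lintegral_Ioi_mul_setLIntegral_Ioc {w k : ℝ → ℝ≥0∞} (hw : Measurable w)
    (hk : Measurable k) :
    ∫⁻ x in Ioi 0, w x * ∫⁻ t in Ioc 0 x, k t = ∫⁻ t in Ioi 0, k t * ∫⁻ x in Ici t, w x := by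
  set F : ℝ × ℝ → ℝ≥0∞ := {z | z.2 ∈ Ioc 0 z.1}.indicator fun z => w z.1 * k z.2
  have hF : Measurable F :=
    ((hw.comp measurable_fst).mul (hk.comp measurable_snd)).indicator
      (measurableSet_snd_mem_Ioc_zero measurable_id)
  have hx (x : ℝ) : ∫⁻ t in Ioi 0, F (x, t) = w x * ∫⁻ t in Ioc 0 x, k t := by
    change ∫⁻ t in Ioi 0, (Ioc 0 x).indicator (fun t => w x * k t) t = _
    rw [lintegral_indicator measurableSet_Ioc, Measure.restrict_restrict measurableSet_Ioc,
      inter_eq_left.2 Ioc_subset_Ioi_self, lintegral_const_mul _ hk]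
  have ht {t : ℝ} (ht : 0 < t) : ∫⁻ x in Ioi 0, F (x, t) = k t * ∫⁻ x in Ici t, w x := by
    have : (fun x => F (x, t)) = (Ici t).indicator fun x => w x * k t := by
      ext x
      by_cases htx : t ≤ x <;> simp [F, ht, htx]
    rw [this, lintegral_indicator measurableSet_Ici, Measure.restrict_restrict measurableSet_Ici,
      inter_eq_left.2 (Ici_subset_Ioi.2 ht), lintegral_mul_const _ hw, mul_comm]
  calc ∫⁻ x in Ioi 0, w x * ∫⁻ t in Ioc 0 x, k t
      = ∫⁻ x in Ioi 0, ∫⁻ t in Ioi 0, F (x, t) := by simp_rw [hx]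
    _ = ∫⁻ t in Ioi 0, ∫⁻ x in Ioi 0, F (x, t) := lintegral_lintegral_swap hF.aemeasurable
    _ = ∫⁻ t in Ioi 0, k t * ∫⁻ x in Ici t, w x :=
      setLIntegral_congr_fun measurableSet_Ioi fun t h => ht h

noncomputable def hardyAverage (g : ℝ → ℝ≥0∞) (x : ℝ) : ℝ≥0∞ :=
  ENNReal.ofReal x⁻¹ * ∫⁻ t in Ioc 0 x, g t

theorem Measurable.hardyAverage {α : Type*} [MeasurableSpace α] {φ : α → ℝ → ℝ≥0∞}
    (hφ : Measurable (Function.uncurry φ)) {a : α → ℝ} (ha : Measurable a) :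
    Measurable fun z => hardyAverage (φ z) (a z) := by
  have : Measurable fun z =>
      ∫⁻ t, {w : α × ℝ | w.2 ∈ Ioc 0 (a w.1)}.indicator (Function.uncurry φ) (z, t) :=
    (hφ.indicator (measurableSet_snd_mem_Ioc_zero ha)).lintegral_prod_right'
  refine ha.inv.ennreal_ofReal.mul ?_
  simp_rw [← lintegral_indicator measurableSet_Ioc]
  exact this

theorem setLIntegral_Ioc_zero_rpow_le {p q : ℝ} (hpq : p.HolderConjugate q) {g : ℝ → ℝ≥0∞}
    (hg : Measurable g) {x : ℝ} (hx : 0 < x) :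
    (∫⁻ t in Ioc 0 x, g t) ^ p ≤ ENNReal.ofReal ((q * x ^ q⁻¹) ^ (p - 1)) *
      ∫⁻ t in Ioc 0 x, g t ^ p * ENNReal.ofReal (t ^ q⁻¹) := by
  have hp0 := hpq.pos
  have hq0 := hpq.symm.pos
  set G : ℝ → ℝ≥0∞ := fun t => g t * ENNReal.ofReal (t ^ (p * q)⁻¹)
  set H : ℝ → ℝ≥0∞ := fun t => ENNReal.ofReal (t ^ (-(p * q)⁻¹))
  have hGH : ∫⁻ t in Ioc 0 x, g t = ∫⁻ t in Ioc 0 x, (G * H) t :=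
    setLIntegral_congr_fun measurableSet_Ioc fun t ht => by
      rw [Pi.mul_apply, mul_assoc, ← ENNReal.ofReal_mul (Real.rpow_nonneg ht.1.le _),
        ← Real.rpow_add ht.1, add_neg_cancel, Real.rpow_zero, ENNReal.ofReal_one, mul_one]
  have hG : ∫⁻ t in Ioc 0 x, G t ^ p = ∫⁻ t in Ioc 0 x, g t ^ p * ENNReal.ofReal (t ^ q⁻¹) :=
    setLIntegral_congr_fun measurableSet_Ioc fun t ht => by
      rw [ENNReal.mul_rpow_of_nonneg _ _ hp0.le,
        ENNReal.ofReal_rpow_of_nonneg (Real.rpow_nonneg ht.1.le _) hp0.le,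
        ← Real.rpow_mul ht.1.le]
      congr 3
      field_simp
  have hH : ∫⁻ t in Ioc 0 x, H t ^ q = ENNReal.ofReal (q * x ^ q⁻¹) := by
    have hHq : ∀ t ∈ Ioc 0 x, H t ^ q = ENNReal.ofReal (t ^ (q⁻¹ - 1)) := fun t ht => by
      rw [ENNReal.ofReal_rpow_of_nonneg (Real.rpow_nonneg ht.1.le _) hq0.le,
        ← Real.rpow_mul ht.1.le]
      congr 2
      rw [← hpq.inv_add_inv_eq_one]
      field_simp
      ring
    rw [setLIntegral_congr_fun measurableSet_Ioc hHq,
      setLIntegral_Ioc_zero_ofReal_rpow hx (by linarith [inv_pos.2 hq0]), sub_add_cancel,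
      div_inv_eq_mul, mul_comm]
  have holder := ENNReal.lintegral_mul_le_Lp_mul_Lq (volume.restrict (Ioc 0 x)) hpq
    (by fun_prop : Measurable G).aemeasurable (by fun_prop : Measurable H).aemeasurable
  calc (∫⁻ t in Ioc 0 x, g t) ^ p
      ≤ ((∫⁻ t in Ioc 0 x, G t ^ p) ^ (1 / p) * (∫⁻ t in Ioc 0 x, H t ^ q) ^ (1 / q)) ^ p := by
        rw [hGH]; gcongr
    _ = _ := by
      rw [hG, hH, ENNReal.mul_rpow_of_nonneg _ _ hp0.le, ← ENNReal.rpow_mul, ← ENNReal.rpow_mul,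
        one_div_mul_cancel hp0.ne', ENNReal.rpow_one, one_div_mul_eq_div,
        hpq.div_conj_eq_sub_one, ENNReal.ofReal_rpow_of_nonneg (by positivity) hpq.sub_one_pos.le,
        mul_comm]

theorem hardyAverage_rpow_le {p q : ℝ} (hpq : p.HolderConjugate q) {g : ℝ → ℝ≥0∞}
    (hg : Measurable g) {x : ℝ} (hx : 0 < x) :
    hardyAverage g x ^ p ≤ ENNReal.ofReal (q ^ (p - 1)) *
      (ENNReal.ofReal (x ^ (-1 - q⁻¹)) * ∫⁻ t in Ioc 0 x, g t ^ p * ENNReal.ofReal (t ^ q⁻¹)) := by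
  have hexp : -p + q⁻¹ * (p - 1) = -1 - q⁻¹ := by
    have h := hpq.inv_add_inv_eq_one
    have := hpq.ne_zero
    field_simp at h ⊢
    linear_combination h
  have hconst : ENNReal.ofReal x⁻¹ ^ p * ENNReal.ofReal ((q * x ^ q⁻¹) ^ (p - 1))
      = ENNReal.ofReal (q ^ (p - 1)) * ENNReal.ofReal (x ^ (-1 - q⁻¹)) := by
    have hx₀ := hx.le
    have hq₀ := hpq.symm.nonneg
    rw [ENNReal.ofReal_rpow_of_nonneg (by positivity) hpq.nonneg,
      ← ENNReal.ofReal_mul (by positivity), ← ENNReal.ofReal_mul (by positivity),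
      Real.inv_rpow hx₀, ← Real.rpow_neg hx₀, Real.mul_rpow hq₀ (by positivity),
      ← Real.rpow_mul hx₀, mul_left_comm, ← Real.rpow_add hx, hexp]
  calc hardyAverage g x ^ p = ENNReal.ofReal x⁻¹ ^ p * (∫⁻ t in Ioc 0 x, g t) ^ p :=
        ENNReal.mul_rpow_of_nonneg _ _ hpq.nonneg
    _ ≤ ENNReal.ofReal x⁻¹ ^ p * (ENNReal.ofReal ((q * x ^ q⁻¹) ^ (p - 1)) *
          ∫⁻ t in Ioc 0 x, g t ^ p * ENNReal.ofReal (t ^ q⁻¹)) := by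
        gcongr; exact setLIntegral_Ioc_zero_rpow_le hpq hg hx
    _ = _ := by rw [← mul_assoc, hconst, mul_assoc]

theorem lintegral_hardyAverage_rpow_le {p : ℝ} (hp : 1 < p) {g : ℝ → ℝ≥0∞} (hg : Measurable g) :
    ∫⁻ x in Ioi 0, hardyAverage g x ^ p
      ≤ ENNReal.ofReal ((p / (p - 1)) ^ p) * ∫⁻ t in Ioi 0, g t ^ p := by
  set q := p / (p - 1)
  have hpq : p.HolderConjugate q := .conjExponent hp
  have hq0 := hpq.symm.pos
  have htail {t : ℝ} (ht : 0 < t) : g t ^ p * ENNReal.ofReal (t ^ q⁻¹) *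
      ∫⁻ x in Ici t, ENNReal.ofReal (x ^ (-1 - q⁻¹)) = ENNReal.ofReal q * g t ^ p := by
    have hweight : t ^ q⁻¹ * (-t ^ (-1 - q⁻¹ + 1) / (-1 - q⁻¹ + 1)) = q := by
      rw [show -1 - q⁻¹ + 1 = -q⁻¹ by ring, Real.rpow_neg ht.le]
      field_simp
    rw [setLIntegral_Ici_ofReal_rpow ht (by linarith [inv_pos.2 hq0]), mul_assoc,
      ← ENNReal.ofReal_mul (by positivity), hweight, mul_comm]
  calc ∫⁻ x in Ioi 0, hardyAverage g x ^ p
      ≤ ∫⁻ x in Ioi 0, ENNReal.ofReal (q ^ (p - 1)) * (ENNReal.ofReal (x ^ (-1 - q⁻¹)) *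
          ∫⁻ t in Ioc 0 x, g t ^ p * ENNReal.ofReal (t ^ q⁻¹)) :=
        setLIntegral_mono' measurableSet_Ioi fun x hx => hardyAverage_rpow_le hpq hg hx
    _ = ENNReal.ofReal (q ^ (p - 1)) * ∫⁻ t in Ioi 0, g t ^ p * ENNReal.ofReal (t ^ q⁻¹) *
          ∫⁻ x in Ici t, ENNReal.ofReal (x ^ (-1 - q⁻¹)) := by
        rw [lintegral_const_mul' _ _ ENNReal.ofReal_ne_top,
          lintegral_Ioi_mul_setLIntegral_Ioc (by fun_prop) (by fun_prop)]
    _ = ENNReal.ofReal (q ^ (p - 1)) * ∫⁻ t in Ioi 0, ENNReal.ofReal q * g t ^ p := by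
        rw [setLIntegral_congr_fun measurableSet_Ioi fun t ht => htail ht]
    _ = ENNReal.ofReal (q ^ p) * ∫⁻ t in Ioi 0, g t ^ p := by
        rw [lintegral_const_mul' _ _ ENNReal.ofReal_ne_top, ← mul_assoc,
          ← ENNReal.ofReal_mul (by positivity), ← Real.rpow_add_one hq0.ne', sub_add_cancel]

noncomputable def hardyAverage₂ (φ : ℝ → ℝ → ℝ≥0∞) (x y : ℝ) : ℝ≥0∞ :=
  ENNReal.ofReal (x * y)⁻¹ * ∫⁻ s in Ioc 0 x, ∫⁻ t in Ioc 0 y, φ s t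

theorem hardyAverage₂_eq_hardyAverage_hardyAverage {φ : ℝ → ℝ → ℝ≥0∞}
    (hφ : Measurable (Function.uncurry φ)) {x : ℝ} (hx : 0 ≤ x) (y : ℝ) :
    hardyAverage₂ φ x y = hardyAverage (fun t => hardyAverage (fun s => φ s t) x) y := by
  simp only [hardyAverage₂, hardyAverage]
  rw [lintegral_lintegral_swap hφ.aemeasurable, lintegral_const_mul' _ _ ENNReal.ofReal_ne_top,
    mul_inv, ENNReal.ofReal_mul (inv_nonneg.2 hx), mul_comm (ENNReal.ofReal x⁻¹), mul_assoc]

theorem lintegral_hardyAverage₂_rpow_le {p : ℝ} (hp : 1 < p) {φ : ℝ → ℝ → ℝ≥0∞}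
    (hφ : Measurable (Function.uncurry φ)) :
    ∫⁻ x in Ioi 0, ∫⁻ y in Ioi 0, hardyAverage₂ φ x y ^ p
      ≤ ENNReal.ofReal ((p / (p - 1)) ^ p) ^ 2 * ∫⁻ x in Ioi 0, ∫⁻ y in Ioi 0, φ x y ^ p := by
  set C := ENNReal.ofReal ((p / (p - 1)) ^ p)
  set H : ℝ → ℝ → ℝ≥0∞ := fun x t => hardyAverage (fun s => φ s t) x
  have hH : Measurable (Function.uncurry H) :=
    Measurable.hardyAverage (φ := fun (z : ℝ × ℝ) s => φ s z.2)
      (hφ.comp (measurable_snd.prodMk (measurable_snd.comp measurable_fst))) measurable_fst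
  calc ∫⁻ x in Ioi 0, ∫⁻ y in Ioi 0, hardyAverage₂ φ x y ^ p
      = ∫⁻ x in Ioi 0, ∫⁻ y in Ioi 0, hardyAverage (H x) y ^ p :=
        setLIntegral_congr_fun measurableSet_Ioi fun x hx => by
          simp_rw [hardyAverage₂_eq_hardyAverage_hardyAverage hφ (le_of_lt hx), H]
    _ ≤ ∫⁻ x in Ioi 0, C * ∫⁻ y in Ioi 0, H x y ^ p :=
        lintegral_mono fun x => lintegral_hardyAverage_rpow_le hp (hH.comp measurable_prodMk_left)
    _ = C * ∫⁻ y in Ioi 0, ∫⁻ x in Ioi 0, H x y ^ p := by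
        rw [lintegral_const_mul' _ _ ENNReal.ofReal_ne_top,
          lintegral_lintegral_swap (hH.pow_const p).aemeasurable]
    _ ≤ C * ∫⁻ y in Ioi 0, C * ∫⁻ x in Ioi 0, φ x y ^ p := by
        gcongr with y
        exact lintegral_hardyAverage_rpow_le hp (hφ.comp measurable_prodMk_right)
    _ = C ^ 2 * ∫⁻ x in Ioi 0, ∫⁻ y in Ioi 0, φ x y ^ p := by
        rw [lintegral_const_mul' _ _ ENNReal.ofReal_ne_top,
          lintegral_lintegral_swap (f := fun y x => φ x y ^ p)
            ((hφ.pow_const p).comp measurable_swap).aemeasurable]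
        ring

theorem ofReal_rpow_le_hardyAverage₂_rpow {f : ℝ → ℝ → ℝ} (hf : ∀ s t, 0 ≤ f s t) {p : ℝ}
    (hp : 0 ≤ p) {x y : ℝ} (hx : 0 ≤ x) (hy : 0 ≤ y) :
    ENNReal.ofReal (((1 / (x * y)) * ∫ s in 0..x, ∫ t in 0..y, f s t) ^ p)
      ≤ hardyAverage₂ (fun s t => ENNReal.ofReal (f s t)) x y ^ p := by
  have hI : 0 ≤ ∫ s in 0..x, ∫ t in 0..y, f s t :=
    intervalIntegral.integral_nonneg hx fun s _ =>
      intervalIntegral.integral_nonneg hy fun t _ => hf s t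
  rw [← ENNReal.ofReal_rpow_of_nonneg (by positivity) hp, ENNReal.ofReal_mul (by positivity),
    one_div, hardyAverage₂]
  gcongr
  simp_rw [intervalIntegral.integral_of_le hx, intervalIntegral.integral_of_le hy]
  exact ofReal_integral_integral_le_lintegral_lintegral _

/-- Classical two-dimensional Hardy inequality on `(0,∞)²`. -/
theorem classical_two_dim_hardy
    (p : ℝ) (hp : 1 < p)
    (f : ℝ → ℝ → ℝ)
    (hf : Measurable (fun q : ℝ × ℝ => f q.1 q.2))
    (hfnonneg : ∀ x y, 0 ≤ f x y)
    (hfp_int : IntegrableOn (fun q : ℝ × ℝ => (f q.1 q.2) ^ p)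
      (Ioi (0:ℝ) ×ˢ Ioi (0:ℝ)))
    (R : ℝ → ℝ → ℝ)
    (hR : ∀ x ∈ Ioi (0:ℝ), ∀ y ∈ Ioi (0:ℝ),
      R x y = (1 / (x * y)) * ∫ s in (0:ℝ)..x, ∫ t in (0:ℝ)..y, f s t) :
    (∫ x in Ioi (0:ℝ), ∫ y in Ioi (0:ℝ), (R x y) ^ p)
      ≤ (p / (p - 1)) ^ (2 * p) * ∫ x in Ioi (0:ℝ), ∫ y in Ioi (0:ℝ), (f x y) ^ p := by
  have hp0 : 0 < p := by linarith
  have hq0 : 0 ≤ p / (p - 1) := div_nonneg hp0.le (by linarith)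
  rw [IntegrableOn, Measure.volume_eq_prod, ← Measure.prod_restrict] at hfp_int
  have hLHS : ENNReal.ofReal (∫ x in Ioi 0, ∫ y in Ioi 0, R x y ^ p)
      ≤ ENNReal.ofReal ((p / (p - 1)) ^ p) ^ 2 *
          ∫⁻ x in Ioi 0, ∫⁻ y in Ioi 0, ENNReal.ofReal (f x y ^ p) :=
    calc ENNReal.ofReal (∫ x in Ioi 0, ∫ y in Ioi 0, R x y ^ p)
        ≤ ∫⁻ x in Ioi 0, ∫⁻ y in Ioi 0, ENNReal.ofReal (R x y ^ p) :=
          ofReal_integral_integral_le_lintegral_lintegral _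
      _ ≤ ∫⁻ x in Ioi 0, ∫⁻ y in Ioi 0, hardyAverage₂ (fun s t => ENNReal.ofReal (f s t)) x y ^ p :=
          setLIntegral_mono' measurableSet_Ioi fun x hx =>
            setLIntegral_mono' measurableSet_Ioi fun y hy => by
              rw [hR x hx y hy]
              exact ofReal_rpow_le_hardyAverage₂_rpow hfnonneg hp0.le (le_of_lt hx) (le_of_lt hy)
      _ ≤ _ := by
          simp_rw [← ENNReal.ofReal_rpow_of_nonneg (hfnonneg _ _) hp0.le]
          exact lintegral_hardyAverage₂_rpow_le hp hf.ennreal_ofReal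
  have key := (ENNReal.ofReal_le_iff_le_toReal
    (ENNReal.mul_ne_top (by simp) (lintegral_lintegral_ofReal_lt_top hfp_int).ne)).1 hLHS
  rwa [ENNReal.toReal_mul, ENNReal.toReal_pow, ENNReal.toReal_ofReal (Real.rpow_nonneg hq0 p),
    ← integral_integral_eq_toReal_lintegral_lintegral (fun x y => Real.rpow_nonneg (hfnonneg x y) p)
      hfp_int, ← Real.rpow_two, ← Real.rpow_mul hq0, mul_comm p] at key
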